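/- Let A be a fixed integer-valued matrix of dimension ℓ×k and b a fixed integer-valued vector of dimension ℓ, such that the pair (A,b) is irredundant and A is irredundant and does not satisfy property (*). If p = p(n) satisfies p·n^{1/3} → 0, then with high probability Breaker wins the (A,b)-game on [n]_p. -/

import Mathlib

/-! If (*) fails, some rational combination of the rows of `A` has exactly two nonzero entries,
in columns `j₁ ≠ j₂`, so every solution of `A x = b` satisfies `α x j₁ + β x j₂ = δ` with
`α, β ≠ 0`. Hence every winning set contains an edge of the graph joining `u ≠ v` when
`α u + β v = δ` or `α v + β u = δ`, and every vertex of this graph has at most two neighbours.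
If no vertex of the board has both of its neighbours on the board, the graph induces a matching
there and Breaker wins by claiming the partner of each vertex Maker claims. Each of the at most
`n` such cherries `{u, v, w}` lies in `[n]_p` with probability `p³`, so Breaker fails with
probability at most `n p³ = (p n^{1/3})³ → 0`. -/


variable {V : Type*} [DecidableEq V]

/-- Maker has a winning strategy in the Maker-Breaker game, given whose turn it is
(`true` = Maker to move), the remaining unclaimed board `R`, and Maker's current set `M`.
Maker wins if at the end of the game (all elements claimed) her set satisfies `win`. -/
def makerWinsAux (win : Finset V → Prop) : Bool → Finset V → Finset V → Prop
  | true, R, M =>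
      if R.Nonempty then ∃ x, ∃ _h : x ∈ R, makerWinsAux win false (R.erase x) (insert x M)
      else win M
  | false, R, M =>
      if R.Nonempty then ∀ x, x ∈ R → makerWinsAux win true (R.erase x) M
      else win M
termination_by _ R _ => R.card
decreasing_by
  · exact Finset.card_erase_lt_of_mem ‹x ∈ R›
  · exact Finset.card_erase_lt_of_mem ‹x ∈ R›

/-- Breaker has a winning strategy (Maker moves first). -/
def breakerWinsAux (win : Finset V → Prop) : Bool → Finset V → Finset V → Prop
  | true, R, M =>
      if R.Nonempty then ∀ x, x ∈ R → breakerWinsAux win false (R.erase x) (insert x M)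
      else ¬ win M
  | false, R, M =>
      if R.Nonempty then ∃ x, ∃ _h : x ∈ R, breakerWinsAux win true (R.erase x) M
      else ¬ win M
termination_by _ R _ => R.card
decreasing_by
  · exact Finset.card_erase_lt_of_mem ‹x ∈ R›
  · exact Finset.card_erase_lt_of_mem ‹x ∈ R›

/-- Maker wins the Maker-Breaker game on board `X` with winning condition `win`. -/
def MakerWins (win : Finset V → Prop) (X : Finset V) : Prop := makerWinsAux win true X ∅

/-- Breaker wins the Maker-Breaker game on board `X` with winning condition `win`. -/
def BreakerWins (win : Finset V → Prop) (X : Finset V) : Prop := breakerWinsAux win true X ∅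

/-- Maker's winning condition in the `(A,b)`-game: her claimed set `M` contains all entries of
some `k`-distinct solution (in positive integers) of `A x = b`. -/
def RadoWin {l k : ℕ} (A : Matrix (Fin l) (Fin k) ℤ) (b : Fin l → ℤ) (M : Finset ℕ) : Prop :=
  ∃ x : Fin k → ℕ, Function.Injective x ∧ (∀ i, x i ∈ M) ∧
    A.mulVec (fun i => (x i : ℤ)) = b

/-- The pair `(A,b)` is irredundant: `A x = b` has a `k`-distinct solution in positive integers. -/
def PairIrredundant {l k : ℕ} (A : Matrix (Fin l) (Fin k) ℤ) (b : Fin l → ℤ) : Prop :=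
  ∃ x : Fin k → ℕ, Function.Injective x ∧ (∀ i, 0 < x i) ∧
    A.mulVec (fun i => (x i : ℤ)) = b

/-- The matrix `A` is irredundant: `A x = 0` has a `k`-distinct solution in positive integers. -/
def MatIrredundant {l k : ℕ} (A : Matrix (Fin l) (Fin k) ℤ) : Prop :=
  PairIrredundant A 0

/-- Property (*): no rational linear combination of the rows of `A` has exactly two
nonzero entries. -/
def PropertyStar {l k : ℕ} (A : Matrix (Fin l) (Fin k) ℤ) : Prop :=
  ∀ c : Fin l → ℚ,
    (Finset.univ.filter fun j : Fin k => (∑ i, c i * (A i j : ℚ)) ≠ 0).card ≠ 2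

/-- The rank (over `ℚ`) of an integer matrix. -/
noncomputable def rankQ {l k : ℕ} (A : Matrix (Fin l) (Fin k) ℤ) : ℕ :=
  (A.map (Int.cast : ℤ → ℚ)).rank

/-- The rank (over `ℚ`) of the matrix `A_{W̄}` formed by the columns of `A` indexed by the
complement of `W`. -/
noncomputable def rankRestrict {l k : ℕ} (A : Matrix (Fin l) (Fin k) ℤ)
    (W : Finset (Fin k)) : ℕ :=
  ((A.map (Int.cast : ℤ → ℚ)).submatrix id (fun j : {j : Fin k // j ∈ Wᶜ} => j.1)).rank

/-- The parameter `m(A)`. -/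
noncomputable def mIndex {l k : ℕ} (A : Matrix (Fin l) (Fin k) ℤ) : ℝ :=
  sSup {x : ℝ | ∃ W : Finset (Fin k), 2 ≤ W.card ∧
    x = ((W.card : ℝ) - 1) / (((W.card : ℝ) - 1) + (rankRestrict A W : ℝ) - (rankQ A : ℝ))}

/-- `A` (an `ℓ×k` matrix of full rank `ℓ`) is strictly balanced. -/
def StrictlyBalanced {l k : ℕ} (A : Matrix (Fin l) (Fin k) ℤ) : Prop :=
  ∀ W : Finset (Fin k), 2 ≤ W.card → W.card < k →
    ((W.card : ℝ) - 1) / (((W.card : ℝ) - 1) + (rankRestrict A W : ℝ) - (l : ℝ))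
      < ((k : ℝ) - 1) / ((k : ℝ) - 1 - (l : ℝ))

open Classical in
/-- `μ(n,A,b)`: the maximum size of a subset of `[n] = {1,…,n}` containing no `k`-distinct
solution to `A x = b`. -/
noncomputable def muMax {l k : ℕ} (n : ℕ) (A : Matrix (Fin l) (Fin k) ℤ) (b : Fin l → ℤ) : ℕ :=
  (((Finset.Icc 1 n).powerset.filter fun S => ¬ RadoWin A b S).sup Finset.card)

open Classical in
/-- The probability that the random subset `[n]_p` (each element of `{1,…,n}` included
independently with probability `p`) satisfies the property `P`. -/
noncomputable def probRandomSubset (n : ℕ) (p : ℝ) (P : Finset ℕ → Prop) : ℝ :=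
  ∑ S ∈ (Finset.Icc 1 n).powerset,
    if P S then p ^ S.card * (1 - p) ^ (n - S.card) else 0

/-- Maker wins the `(A,b)`-game on the board `X` (Maker moves first). -/
def MakerWinsRado {l k : ℕ} (A : Matrix (Fin l) (Fin k) ℤ) (b : Fin l → ℤ)
    (X : Finset ℕ) : Prop :=
  MakerWins (RadoWin A b) X

/-- Breaker wins the `(A,b)`-game on the board `X` (Maker moves first). -/
def BreakerWinsRado {l k : ℕ} (A : Matrix (Fin l) (Fin k) ℤ) (b : Fin l → ℤ)
    (X : Finset ℕ) : Prop :=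
  BreakerWins (RadoWin A b) X

namespace SimpleGraph

def InducesMatching (G : SimpleGraph V) (S : Finset V) : Prop :=
  ∀ u ∈ S, ∀ v ∈ S, ∀ w ∈ S, G.Adj u v → G.Adj u w → v = w

/-- `R` is the unclaimed part of the board and `M` is Maker's set, so the vertices in neither
are Breaker's. -/
def PartnersClaimedByBreaker (G : SimpleGraph V) (R M : Finset V) : Prop :=
  ∀ ⦃u v⦄, G.Adj u v → u ∈ M → v ∉ R ∧ v ∉ M

variable {G : SimpleGraph V} {R R' M : Finset V} {x : V}

theorem PartnersClaimedByBreaker.insert (h : G.PartnersClaimedByBreaker R M) (hx : x ∈ R)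
    (hR' : R' ⊆ R.erase x) (hxR' : ∀ v ∈ R', ¬ G.Adj x v) :
    G.PartnersClaimedByBreaker R' (insert x M) := by
  intro u v huv hu
  rcases Finset.mem_insert.1 hu with rfl | hu
  · refine ⟨fun hv => hxR' v hv huv, ?_⟩
    rw [Finset.mem_insert, not_or]
    exact ⟨huv.ne.symm, fun hv => (h huv.symm hv).1 hx⟩
  · obtain ⟨hvR, hvM⟩ := h huv hu
    refine ⟨fun hv => hvR (Finset.mem_of_mem_erase (hR' hv)), ?_⟩
    rw [Finset.mem_insert, not_or]
    exact ⟨by rintro rfl; exact hvR hx, hvM⟩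

variable {win : Finset V → Prop} {X : Finset V}

theorem breakerWinsAux_of_partnersClaimedByBreaker (hX : G.InducesMatching X)
    (hwin : ∀ M ⊆ X, win M → ∃ u ∈ M, ∃ v ∈ M, G.Adj u v) (R : Finset V) :
    ∀ M, R ⊆ X → M ⊆ X → G.PartnersClaimedByBreaker R M → breakerWinsAux win true R M := by
  have makerLoses : ∀ R M, M ⊆ X → G.PartnersClaimedByBreaker R M → ¬ win M :=
    fun R M hMX h hM => by
      obtain ⟨u, hu, v, hv, huv⟩ := hwin M hMX hM
      exact (h huv hu).2 hv
  induction R using Finset.strongInduction with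
  | H R ih =>
    intro M hRX hMX h
    rw [breakerWinsAux]
    split_ifs with hR
    · intro x hx
      have hMX' : insert x M ⊆ X := Finset.insert_subset (hRX hx) hMX
      rw [breakerWinsAux]
      split_ifs with hR'
      · -- Breaker claims the partner of `x` if it is still free, any free vertex otherwise.
        obtain ⟨y, hy, hxy⟩ : ∃ y ∈ R.erase x, ∀ v ∈ R.erase x, G.Adj x v → v = y := by
          by_cases hpartner : ∃ v ∈ R.erase x, G.Adj x v
          · obtain ⟨v, hv, hxv⟩ := hpartner
            exact ⟨v, hv, fun w hw hxw => hX x (hRX hx) w (hRX (Finset.mem_of_mem_erase hw))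
              v (hRX (Finset.mem_of_mem_erase hv)) hxw hxv⟩
          · push Not at hpartner
            obtain ⟨y, hy⟩ := hR'
            exact ⟨y, hy, fun v hv hxv => absurd hxv (hpartner v hv)⟩
        have hsub : (R.erase x).erase y ⊆ R.erase x := Finset.erase_subset _ _
        refine ⟨y, hy, ih _ (hsub.trans_ssubset (Finset.erase_ssubset hx)) _
          ((hsub.trans (Finset.erase_subset _ _)).trans hRX) hMX' (h.insert hx hsub ?_)⟩
        intro v hv hxv
        exact (Finset.mem_erase.1 hv).1 (hxy v (Finset.mem_of_mem_erase hv) hxv)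
      · rw [Finset.not_nonempty_iff_eq_empty] at hR'
        refine makerLoses ∅ _ hMX' (h.insert hx hR'.ge ?_)
        simp
    · exact makerLoses R M hMX h

theorem breakerWins_of_inducesMatching (hX : G.InducesMatching X)
    (hwin : ∀ M ⊆ X, win M → ∃ u ∈ M, ∃ v ∈ M, G.Adj u v) : BreakerWins win X :=
  breakerWinsAux_of_partnersClaimedByBreaker hX hwin X ∅ subset_rfl (Finset.empty_subset _)
    (fun _ _ _ hu => absurd hu (Finset.notMem_empty _))

end SimpleGraph

section RandomSubset

open Finset

variable {n : ℕ} {p : ℝ}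

theorem probRandomSubset_add_not (P : Finset ℕ → Prop) :
    probRandomSubset n p P + probRandomSubset n p (fun S => ¬ P S) = 1 := by
  have hsum := sum_pow_mul_eq_add_pow p (1 - p) (Icc 1 n)
  rw [Nat.card_Icc, Nat.add_sub_cancel, add_sub_cancel, one_pow] at hsum
  rw [probRandomSubset, probRandomSubset, ← sum_add_distrib, ← hsum]
  refine sum_congr rfl fun S _ => ?_
  split_ifs <;> simp_all

theorem probRandomSubset_eq_sum_filter (P : Finset ℕ → Prop) [DecidablePred P] :
    probRandomSubset n p P = ∑ S ∈ (Icc 1 n).powerset with P S, p ^ #S * (1 - p) ^ (n - #S) := by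
  rw [probRandomSubset, sum_filter]
  congr!

theorem probRandomSubset_superset {t : Finset ℕ} (ht : t ⊆ Icc 1 n) :
    probRandomSubset n p (t ⊆ ·) = p ^ #t := by
  have hdisj : ∀ u ∈ (Icc 1 n \ t).powerset, Disjoint t u := fun u hu =>
    disjoint_of_subset_right (mem_powerset.1 hu) disjoint_sdiff
  have hcard : #(Icc 1 n \ t) = n - #t := by rw [card_sdiff_of_subset ht, Nat.card_Icc]; rfl
  rw [probRandomSubset_eq_sum_filter, ← Icc_eq_filter_powerset,
    Icc_eq_image_powerset ht, sum_image, sum_congr rfl fun u hu => by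
      rw [card_union_of_disjoint (hdisj u hu), pow_add, Nat.sub_add_eq, ← hcard, mul_assoc],
    ← mul_sum, sum_pow_mul_eq_add_pow, add_sub_cancel, one_pow, mul_one]
  intro u hu v hv huv
  rw [← union_sdiff_cancel_left (hdisj u hu), ← union_sdiff_cancel_left (hdisj v hv)]
  exact congrArg (· \ t) huv

theorem pow_mul_one_sub_pow_nonneg (hp0 : 0 ≤ p) (hp1 : p ≤ 1) (a b : ℕ) :
    0 ≤ p ^ a * (1 - p) ^ b :=
  mul_nonneg (pow_nonneg hp0 a) (pow_nonneg (sub_nonneg.2 hp1) b)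

theorem probRandomSubset_nonneg (hp0 : 0 ≤ p) (hp1 : p ≤ 1) (P : Finset ℕ → Prop) :
    0 ≤ probRandomSubset n p P :=
  sum_nonneg fun _ _ => by
    split_ifs
    · exact pow_mul_one_sub_pow_nonneg hp0 hp1 _ _
    · exact le_rfl

theorem probRandomSubset_le_one (hp0 : 0 ≤ p) (hp1 : p ≤ 1) (P : Finset ℕ → Prop) :
    probRandomSubset n p P ≤ 1 := by
  linarith [probRandomSubset_add_not (n := n) (p := p) P,
    probRandomSubset_nonneg (n := n) hp0 hp1 fun S => ¬ P S]

theorem probRandomSubset_mono (hp0 : 0 ≤ p) (hp1 : p ≤ 1) {P Q : Finset ℕ → Prop}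
    (h : ∀ S ⊆ Icc 1 n, P S → Q S) : probRandomSubset n p P ≤ probRandomSubset n p Q :=
  sum_le_sum fun S hS => by
    split_ifs with hP hQ
    · exact le_rfl
    · exact absurd (h S (mem_powerset.1 hS) hP) hQ
    · exact pow_mul_one_sub_pow_nonneg hp0 hp1 _ _
    · exact le_rfl

theorem probRandomSubset_exists_le_sum (hp0 : 0 ≤ p) (hp1 : p ≤ 1) {ι : Type*} (I : Finset ι)
    (Q : ι → Finset ℕ → Prop) :
    probRandomSubset n p (fun S => ∃ i ∈ I, Q i S) ≤ ∑ i ∈ I, probRandomSubset n p (Q i) := by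
  classical
  unfold probRandomSubset
  rw [sum_comm (s := I)]
  refine sum_le_sum fun S _ => ?_
  have hterm : ∀ i ∈ I, 0 ≤ if Q i S then p ^ #S * (1 - p) ^ (n - #S) else 0 := fun i _ => by
    split_ifs
    · exact pow_mul_one_sub_pow_nonneg hp0 hp1 _ _
    · exact le_rfl
  split_ifs with hQ
  · obtain ⟨i, hi, hQi⟩ := hQ
    exact (if_pos hQi).symm.le.trans (single_le_sum hterm hi)
  · exact sum_nonneg hterm

theorem one_sub_sum_le_probRandomSubset (hp0 : 0 ≤ p) (hp1 : p ≤ 1) {P : Finset ℕ → Prop}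
    {ι : Type*} (I : Finset ι) (t : ι → Finset ℕ) (ht : ∀ i ∈ I, t i ⊆ Icc 1 n)
    (hcover : ∀ S ⊆ Icc 1 n, ¬ P S → ∃ i ∈ I, t i ⊆ S) :
    1 - ∑ i ∈ I, p ^ #(t i) ≤ probRandomSubset n p P := by
  calc 1 - ∑ i ∈ I, p ^ #(t i)
      = 1 - ∑ i ∈ I, probRandomSubset n p (t i ⊆ ·) := by
        rw [sum_congr rfl fun i hi => probRandomSubset_superset (ht i hi)]
    _ ≤ 1 - probRandomSubset n p (fun S => ∃ i ∈ I, t i ⊆ S) := by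
        gcongr; exact probRandomSubset_exists_le_sum hp0 hp1 I _
    _ ≤ 1 - probRandomSubset n p (fun S => ¬ P S) := by
        gcongr; exact probRandomSubset_mono hp0 hp1 hcover
    _ = probRandomSubset n p P := by linarith [probRandomSubset_add_not (n := n) (p := p) P]

end RandomSubset

open Finset in
theorem one_sub_mul_pow_three_le_probRandomSubset_inducesMatching {n : ℕ} {p : ℝ}
    (hp0 : 0 ≤ p) (hp1 : p ≤ 1) (G : SimpleGraph ℕ)
    (hdeg : ∀ u (s : Finset ℕ), (∀ v ∈ s, G.Adj u v) → #s ≤ 2) :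
    1 - n * p ^ 3 ≤ probRandomSubset n p G.InducesMatching := by
  classical
  set N : ℕ → Finset ℕ := fun u => {v ∈ Icc 1 n | G.Adj u v}
  set I : Finset ℕ := {u ∈ Icc 1 n | #(N u) = 2}
  have hN : ∀ u, ∀ v ∈ N u, G.Adj u v := fun u v hv => (mem_filter.1 hv).2
  have hcard : ∀ u ∈ I, #(insert u (N u)) = 3 := fun u hu => by
    rw [card_insert_of_notMem fun hu' => G.irrefl (hN u u hu'), (mem_filter.1 hu).2]
  have hsum : ∑ u ∈ I, p ^ #(insert u (N u)) ≤ n * p ^ 3 := by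
    rw [sum_congr rfl fun u hu => by rw [hcard u hu], sum_const, nsmul_eq_mul]
    gcongr
    calc #I ≤ #(Icc 1 n) := card_filter_le _ _
      _ = n := by simp
  have hsub : ∀ u ∈ I, insert u (N u) ⊆ Icc 1 n := fun u hu =>
    insert_subset (mem_filter.1 hu).1 (filter_subset _ _)
  refine le_trans (by linarith)
    (one_sub_sum_le_probRandomSubset hp0 hp1 I (fun u => insert u (N u)) hsub ?_)
  intro S hS hS'
  simp only [SimpleGraph.InducesMatching, not_forall] at hS'
  obtain ⟨u, hu, v, hv, w, hw, huv, huw, hvw⟩ := hS'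
  have hvwN : {v, w} ⊆ N u := by
    simp only [insert_subset_iff, singleton_subset_iff, N, mem_filter]
    exact ⟨⟨hS hv, huv⟩, hS hw, huw⟩
  have hNeq : {v, w} = N u :=
    eq_of_subset_of_card_le hvwN ((hdeg u _ (hN u)).trans (card_pair hvw).ge)
  refine ⟨u, mem_filter.2 ⟨hS hu, ?_⟩, insert_subset hu ?_⟩
  · rw [← hNeq, card_pair hvw]
  · rw [← hNeq]
    exact insert_subset hv (singleton_subset_iff.2 hw)

def linearPairGraph (α β δ : ℚ) : SimpleGraph ℕ :=
  SimpleGraph.fromRel fun u v : ℕ => α * u + β * v = δ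

theorem linearPairGraph_card_le_two {α β δ : ℚ} (hα : α ≠ 0) (hβ : β ≠ 0) (u : ℕ)
    (s : Finset ℕ) (hs : ∀ v ∈ s, (linearPairGraph α β δ).Adj u v) : s.card ≤ 2 := by
  refine (Finset.card_le_card_of_injOn (fun v : ℕ => (v : ℚ))
    (t := {(δ - α * u) / β, (δ - β * u) / α}) ?_ Nat.cast_injective.injOn).trans Finset.card_le_two
  intro v hv
  simp only [Finset.coe_insert, Finset.coe_singleton, Set.mem_insert_iff, Set.mem_singleton_iff]
  obtain ⟨-, h | h⟩ := (SimpleGraph.fromRel_adj _ _ _).1 (hs v hv)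
  · left
    field_simp
    linarith
  · right
    field_simp
    linarith

open Matrix in
theorem exists_linear_relation_of_not_propertyStar {l k : ℕ} {A : Matrix (Fin l) (Fin k) ℤ}
    (hA : ¬ PropertyStar A) (b : Fin l → ℤ) :
    ∃ j₁ j₂ : Fin k, j₁ ≠ j₂ ∧ ∃ α β δ : ℚ, α ≠ 0 ∧ β ≠ 0 ∧
      ∀ x : Fin k → ℤ, A *ᵥ x = b → α * x j₁ + β * x j₂ = δ := by
  simp only [PropertyStar, not_forall, not_not] at hA
  obtain ⟨c, hc⟩ := hA
  obtain ⟨j₁, j₂, hne, hsupp⟩ := Finset.card_eq_two.1 hc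
  set r : Fin k → ℚ := vecMul c (A.map (Int.cast : ℤ → ℚ))
  have hsupp' : ∀ j, r j ≠ 0 ↔ j = j₁ ∨ j = j₂ := fun j => by
    simpa [r, vecMul, dotProduct] using Finset.ext_iff.1 hsupp j
  have hzero : ∀ j, j ≠ j₁ ∧ j ≠ j₂ → r j = 0 := fun j hj => by
    by_contra h
    exact hj.1 ((hsupp' j).1 h |>.resolve_right hj.2)
  refine ⟨j₁, j₂, hne, r j₁, r j₂, c ⬝ᵥ (Int.cast ∘ b), (hsupp' j₁).2 (Or.inl rfl),
    (hsupp' j₂).2 (Or.inr rfl), fun x hx => ?_⟩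
  calc r j₁ * x j₁ + r j₂ * x j₂ = r ⬝ᵥ (Int.cast ∘ x) :=
        (Fintype.sum_eq_add (f := fun j => r j * x j) j₁ j₂ hne fun j hj => by
          simp [hzero j hj]).symm
    _ = c ⬝ᵥ (A.map (Int.cast : ℤ → ℚ) *ᵥ (Int.cast ∘ x)) := (dotProduct_mulVec _ _ _).symm
    _ = c ⬝ᵥ (Int.cast ∘ b) := by
        rw [← hx]
        congr 1
        ext i
        exact (RingHom.map_mulVec (Int.castRingHom ℚ) A x i).symm

open Matrix in
theorem breakerWinsRado_of_inducesMatching {l k : ℕ} {A : Matrix (Fin l) (Fin k) ℤ}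
    {b : Fin l → ℤ} {j₁ j₂ : Fin k} (hne : j₁ ≠ j₂) {α β δ : ℚ}
    (hrel : ∀ x : Fin k → ℤ, A *ᵥ x = b → α * x j₁ + β * x j₂ = δ) {S : Finset ℕ}
    (hS : (linearPairGraph α β δ).InducesMatching S) : BreakerWinsRado A b S :=
  SimpleGraph.breakerWins_of_inducesMatching hS fun _ _ ⟨x, hinj, hxM, hx⟩ =>
    ⟨x j₁, hxM j₁, x j₂, hxM j₂, (SimpleGraph.fromRel_adj _ _ _).2
      ⟨hinj.ne hne, Or.inl (by exact_mod_cast hrel _ hx)⟩⟩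

theorem tendsto_mul_pow_three_of_tendsto_mul_rpow {p : ℕ → ℝ}
    (h : Filter.Tendsto (fun n : ℕ => p n * (n : ℝ) ^ ((1 : ℝ) / 3)) Filter.atTop (nhds 0)) :
    Filter.Tendsto (fun n : ℕ => n * p n ^ 3) Filter.atTop (nhds 0) := by
  have hcube : ∀ n : ℕ, (p n * (n : ℝ) ^ ((1 : ℝ) / 3)) ^ 3 = n * p n ^ 3 := fun n => by
    rw [mul_pow, ← Real.rpow_mul_natCast n.cast_nonneg]
    norm_num
    ring
  have := h.pow 3
  rw [zero_pow three_ne_zero] at this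
  exact this.congr hcube

theorem not_star_breaker_win_general {l k : ℕ} (A : Matrix (Fin l) (Fin k) ℤ) (b : Fin l → ℤ)
    (hstar : ¬ PropertyStar A)
    (p : ℕ → ℝ) (hp : ∀ n, 0 ≤ p n ∧ p n ≤ 1)
    (hp0 : Filter.Tendsto (fun n : ℕ => p n * (n : ℝ) ^ ((1 : ℝ) / 3))
      Filter.atTop (nhds 0)) :
    Filter.Tendsto
      (fun n => probRandomSubset n (p n) (fun S => BreakerWinsRado A b S))
      Filter.atTop (nhds 1) := by
  obtain ⟨j₁, j₂, hne, α, β, δ, hα, hβ, hrel⟩ := exists_linear_relation_of_not_propertyStar hstar b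
  have hlower : ∀ n : ℕ, 1 - n * p n ^ 3 ≤ probRandomSubset n (p n) (BreakerWinsRado A b) :=
    fun n => (one_sub_mul_pow_three_le_probRandomSubset_inducesMatching (hp n).1 (hp n).2 _
      (linearPairGraph_card_le_two hα hβ)).trans <| probRandomSubset_mono (hp n).1 (hp n).2
        fun _ _ hS => breakerWinsRado_of_inducesMatching hne hrel hS
  have hlim : Filter.Tendsto (fun n : ℕ => 1 - n * p n ^ 3) Filter.atTop (nhds 1) := by
    simpa using (tendsto_mul_pow_three_of_tendsto_mul_rpow hp0).const_sub 1
  exact tendsto_of_tendsto_of_tendsto_of_le_of_le hlim tendsto_const_nhds hlower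
    fun n => probRandomSubset_le_one (hp n).1 (hp n).2 _

/-- Theorem 4.1(ii) of the paper. If `(A,b)` is irredundant and `A` is
irredundant but does not satisfy (*), then whenever `p·n^{1/3} → 0`, w.h.p. Breaker wins
the `(A,b)`-game on `[n]_p`. -/
theorem not_star_breaker_win {l k : ℕ} (A : Matrix (Fin l) (Fin k) ℤ) (b : Fin l → ℤ)
    (hAb : PairIrredundant A b) (hA : MatIrredundant A) (hstar : ¬ PropertyStar A)
    (p : ℕ → ℝ) (hp : ∀ n, 0 ≤ p n ∧ p n ≤ 1)
    (hp0 : Filter.Tendsto (fun n : ℕ => p n * (n : ℝ) ^ ((1 : ℝ) / 3))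
      Filter.atTop (nhds 0)) :
    Filter.Tendsto
      (fun n => probRandomSubset n (p n) (fun S => BreakerWinsRado A b S))
      Filter.atTop (nhds 1) :=
  not_star_breaker_win_general A b hstar p hp hp0
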